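/- arXiv:2005.04759 — 2 statements merged into one kernel-verified Lean document; each statement's English description precedes it below -/
import Mathlib

section
/- For y = (k,k,...,k) ∈ (Z_+)^n and z = 1, the number of increasing parking sequences for (y;1) equals the Fuss–Catalan number (1/(kn+1)) · binom((k+1)n, n). -/
open Finset

/-- The first empty spot `j` with `c ≤ j ≤ M` (street spots are `1..M`). -/
def firstEmpty (occ : Finset ℕ) (M c : ℕ) : Option ℕ :=
  (List.range' c (M + 1 - c)).find? (fun j => decide (j ∉ occ))

/-- Park cars with preferences `cs` and lengths `ys` on a street with spots `1..M`,
where `occ` is the set of already-occupied spots.  Returns the list of starting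
spots of the cars (in order of entry) if all cars can park. -/
def parkAux (M : ℕ) : Finset ℕ → List ℕ → List ℕ → Option (List ℕ)
  | _, [], [] => some []
  | occ, c :: cs, y :: ys =>
    match firstEmpty occ M c with
    | none => none
    | some j =>
      if (∀ i ∈ Finset.Ico j (j + y), i ∉ occ) ∧ j + y - 1 ≤ M then
        (parkAux M (occ ∪ Finset.Ico j (j + y)) cs ys).map (j :: ·)
      else none
  | _, _, _ => none

/-- Outcome of the parking process for length vector `ys`, preference sequence `cs`,
and trailer parameter `z` (the trailer occupies spots `1,…,z-1`); the street has
`z - 1 + ys.sum` spots. -/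
def parkResult (ys cs : List ℕ) (z : ℕ) : Option (List ℕ) :=
  parkAux (z - 1 + ys.sum) (Finset.Ico 1 z) cs ys

/-- `cs` is a parking sequence for `(ys; z)`. -/
def IsParkingSeq (ys cs : List ℕ) (z : ℕ) : Prop :=
  cs.length = ys.length ∧ (∀ c ∈ cs, 1 ≤ c) ∧ (parkResult ys cs z).isSome = true

/-- Starting spots of the standard (no-gap, in order) final configuration. -/
def standardStarts (z : ℕ) : List ℕ → List ℕ
  | [] => []
  | y :: ys => z :: standardStarts (z + y) ys

/-- `cs` parks `ys` in the standard order `T, C₁, …, Cₙ`. -/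
def ParksStandard (ys cs : List ℕ) (z : ℕ) : Prop :=
  parkResult ys cs z = some (standardStarts z ys)

/-- `cs` is a permutation-invariant parking sequence for `(ys; z)`. -/
def PermInvariant (ys cs : List ℕ) (z : ℕ) : Prop :=
  ∀ cs' : List ℕ, cs'.Perm cs → IsParkingSeq ys cs' z

/-- `cs` is a strong parking sequence for `{ys; z}`. -/
def StrongParkingSeq (ys cs : List ℕ) (z : ℕ) : Prop :=
  ∀ ys' : List ℕ, ys'.Perm ys → IsParkingSeq ys' cs z

/-- The nondecreasing rearrangement (order statistics) of a list. -/
def orderStats (l : List ℕ) : List ℕ :=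
  Multiset.sort (l : Multiset ℕ) (· ≤ ·)

/-- `xs` is a `u`-parking function. -/
def IsUPF (u xs : List ℕ) : Prop :=
  xs.length = u.length ∧ (∀ x ∈ xs, 1 ≤ x) ∧
    ∀ i < u.length, (orderStats xs).getD i 0 ≤ u.getD i 0

/-!
A nondecreasing preference sequence parks the cars without gaps and in order, so it is a
parking sequence exactly when `c_i ≤ 1 + (i - 1) k` for all `i`, i.e. when every initial
segment `[1, j]` of the street, `j ≤ kn`, receives at least `j / k` preferences.  Reading the
preferences `c - 1` as an `n`-multiset of residues modulo `kn + 1`, this is a ballot condition,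
and the cycle lemma says that exactly one of the `kn + 1` rotations of any `n`-multiset
satisfies it: the walk `j ↦ k · #{preferences below j} - j` on the periodic lift drops by one
per period, and the good rotation starts at its first minimum.  Hence `kn + 1` times the
number of sequences is `binom(kn + n, n)`, the number of `n`-multisets in `ZMod (kn + 1)`.
-/

lemma firstEmpty_Ico_eq {e M c : ℕ} (hc : 1 ≤ c) (hce : c ≤ e) (heM : e ≤ M) :
    firstEmpty (Ico 1 e) M c = some e := by
  have hsplit : List.range' c (M + 1 - c)
      = List.range' c (e - c) ++ List.range' (c + (e - c)) (M - e + 1) := by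
    rw [List.range'_append_1]
    congr 1
    omega
  rw [Nat.add_sub_cancel' hce, List.range'_succ] at hsplit
  rw [firstEmpty, hsplit, List.find?_append, List.find?_eq_none.mpr]
  · simp
  · intro x hx
    rw [List.mem_range'_1] at hx
    simp only [mem_Ico, decide_eq_true_eq, not_not]
    omega

lemma firstEmpty_spec {occ : Finset ℕ} {M c j : ℕ} (h : firstEmpty occ M c = some j) :
    c ≤ j ∧ j ≤ M ∧ j ∉ occ := by
  have hmem := List.mem_of_find?_eq_some h
  have hfree := List.find?_some h
  rw [List.mem_range'_1] at hmem
  simp only [decide_eq_true_eq] at hfree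
  exact ⟨hmem.1, by omega, hfree⟩

lemma parkAux_cons_eq_some {M : ℕ} {occ : Finset ℕ} {c y : ℕ} {cs ys L : List ℕ}
    (h : parkAux M occ (c :: cs) (y :: ys) = some L) :
    ∃ j L', firstEmpty occ M c = some j ∧ (∀ i ∈ Ico j (j + y), i ∉ occ) ∧ j + y - 1 ≤ M ∧
      parkAux M (occ ∪ Ico j (j + y)) cs ys = some L' ∧ L = j :: L' := by
  cases hj : firstEmpty occ M c with
  | none => simp [parkAux, hj] at h
  | some j =>
    simp only [parkAux, hj] at h
    split_ifs at h with hfits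
    obtain ⟨L', hL', rfl⟩ := Option.map_eq_some_iff.mp h
    exact ⟨j, L', rfl, hfits.1, hfits.2, hL', rfl⟩

lemma exists_subset_Ico_card_eq_sum_of_parkAux_eq_some {M b : ℕ} :
    ∀ {occ : Finset ℕ} {cs ys L : List ℕ}, parkAux M occ cs ys = some L → (∀ c ∈ cs, b ≤ c) →
      ∃ U ⊆ Ico b (M + 1), Disjoint U occ ∧ #U = ys.sum
  | _, [], [], _, _, _ => ⟨∅, by simp⟩
  | _, [], _ :: _, _, h, _ => by simp [parkAux] at h
  | _, _ :: _, [], _, h, _ => by simp [parkAux] at h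
  | occ, c :: cs, y :: ys, L, h, hb => by
    obtain ⟨j, L', hj, hfree, hfits, hrest, -⟩ := parkAux_cons_eq_some h
    obtain ⟨U, hU, hdisj, hcard⟩ :=
      exists_subset_Ico_card_eq_sum_of_parkAux_eq_some hrest fun x hx => hb x (.tail _ hx)
    have hcj := (firstEmpty_spec hj).1
    have hbc := hb c List.mem_cons_self
    refine ⟨Ico j (j + y) ∪ U, union_subset ?_ hU, ?_, ?_⟩
    · intro x hx
      simp only [mem_Ico] at hx ⊢
      omega
    · exact disjoint_union_left.mpr
        ⟨disjoint_left.mpr hfree, disjoint_of_subset_right subset_union_left hdisj⟩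
    · rw [card_union_of_disjoint (disjoint_of_subset_right subset_union_right hdisj).symm,
        Nat.card_Ico, hcard, List.sum_cons]
      omega

lemma parkAux_Ico_eq_standardStarts {e : ℕ} (he : 1 ≤ e) :
    ∀ {cs ys : List ℕ}, (∀ y ∈ ys, 0 < y) → (∀ c ∈ cs, 1 ≤ c) →
      List.Forall₂ (· ≤ ·) cs (standardStarts e ys) →
      parkAux (e - 1 + ys.sum) (Ico 1 e) cs ys = some (standardStarts e ys)
  | [], [], _, _, _ => rfl
  | c :: cs, y :: ys, hy, hc, hle => by
    rw [standardStarts, List.forall₂_cons] at hle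
    have hy0 := hy y List.mem_cons_self
    have hsum : e - 1 + (y :: ys).sum = e + y - 1 + ys.sum := by
      rw [List.sum_cons]; omega
    have hfree : ∀ i ∈ Ico e (e + y), i ∉ Ico 1 e := by
      intro i hi; simp only [mem_Ico] at hi ⊢; omega
    have hrest := parkAux_Ico_eq_standardStarts (e := e + y) (by omega)
      (fun y hy' => hy y (.tail _ hy')) (fun c hc' => hc c (.tail _ hc')) hle.2
    rw [hsum, parkAux, firstEmpty_Ico_eq (hc c List.mem_cons_self) hle.1 (by omega)]
    dsimp only
    rw [if_pos ⟨hfree, by omega⟩, Ico_union_Ico_eq_Ico he (by omega), hrest]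
    rfl
  | [], _ :: _, _, _, hle => by simp [standardStarts] at hle
  | _ :: _, [], _, _, hle => by simp [standardStarts] at hle

/-- Since the preferences are sorted, the cars from the first one on fill `ys.sum` spots in
`[c, e - 1 + ys.sum]`; so `c ≤ e`, the first car parks at `e`, and we recurse. -/
lemma forall₂_le_standardStarts_of_parkAux {e : ℕ} (he : 1 ≤ e) :
    ∀ {cs ys : List ℕ}, (∀ y ∈ ys, 0 < y) → cs.Pairwise (· ≤ ·) → (∀ c ∈ cs, 1 ≤ c) →
      (parkAux (e - 1 + ys.sum) (Ico 1 e) cs ys).isSome →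
      List.Forall₂ (· ≤ ·) cs (standardStarts e ys)
  | [], [], _, _, _, _ => .nil
  | c :: cs, y :: ys, hy, hs, hc, hpark => by
    obtain ⟨L, hL⟩ := Option.isSome_iff_exists.mp hpark
    obtain ⟨U, hU, -, hcard⟩ := exists_subset_Ico_card_eq_sum_of_parkAux_eq_some (b := c) hL
      (List.forall_mem_cons.mpr ⟨le_rfl, fun _ => List.rel_of_pairwise_cons hs⟩)
    have hy0 := hy y List.mem_cons_self
    have hc1 := hc c List.mem_cons_self
    have hce : c ≤ e := by
      have := card_le_card hU
      rw [Nat.card_Ico, hcard, List.sum_cons] at this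
      omega
    obtain ⟨j, L', hj, -, -, hrest, -⟩ := parkAux_cons_eq_some hL
    have hje : j = e := by
      have hspec := firstEmpty_spec hj
      rw [firstEmpty_Ico_eq hc1 hce (by simp only [mem_Ico] at hspec; omega)] at hj
      exact (Option.some_injective _ hj).symm
    subst hje
    rw [Ico_union_Ico_eq_Ico he (by omega), List.sum_cons,
      show j - 1 + (y + ys.sum) = j + y - 1 + ys.sum by omega] at hrest
    exact .cons hce (forall₂_le_standardStarts_of_parkAux (by omega)
      (fun y hy' => hy y (.tail _ hy')) hs.of_cons
      (fun c hc' => hc c (.tail _ hc')) (by simp [hrest]))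
  | [], _ :: _, _, _, _, hpark => by simp [parkAux] at hpark
  | _ :: _, [], _, _, _, hpark => by simp [parkAux] at hpark

@[simp]
lemma length_standardStarts (z : ℕ) (ys : List ℕ) : (standardStarts z ys).length = ys.length := by
  induction ys generalizing z <;> simp [standardStarts, *]

theorem isParkingSeq_iff_forall₂_le_standardStarts {ys cs : List ℕ} {z : ℕ} (hz : 1 ≤ z)
    (hy : ∀ y ∈ ys, 0 < y) (hs : cs.Pairwise (· ≤ ·)) :
    IsParkingSeq ys cs z ↔ (∀ c ∈ cs, 1 ≤ c) ∧ List.Forall₂ (· ≤ ·) cs (standardStarts z ys) := by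
  refine ⟨fun ⟨_, hc, hpark⟩ => ⟨hc, forall₂_le_standardStarts_of_parkAux hz hy hs hc hpark⟩,
    fun ⟨hc, hle⟩ => ⟨?_, hc, ?_⟩⟩
  · rw [hle.length_eq, length_standardStarts]
  · rw [parkResult, parkAux_Ico_eq_standardStarts hz hy hc hle]
    rfl

lemma standardStarts_replicate (e n k : ℕ) :
    standardStarts e (List.replicate n k) = (List.range n).map (e + · * k) := by
  induction n generalizing e with
  | zero => rfl
  | succ n ih =>
    rw [List.replicate_succ, standardStarts, ih, List.range_succ_eq_map]
    simp only [List.map_cons, List.map_map]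
    congr 2
    · ring
    · ext i; simp only [Function.comp_apply, Nat.succ_eq_add_one]; ring

lemma forall₂_le_standardStarts_replicate_iff {cs : List ℕ} {e n k : ℕ} :
    List.Forall₂ (· ≤ ·) cs (standardStarts e (List.replicate n k)) ↔
      cs.length = n ∧ ∀ i (hi : i < cs.length), cs[i] ≤ e + i * k := by
  rw [standardStarts_replicate, List.forall₂_iff_get]
  simp only [List.length_map, List.length_range, List.get_eq_getElem, List.getElem_map,
    List.getElem_range, and_congr_right_iff]
  rintro rfl
  exact ⟨fun h i hi => h i hi hi, fun h i hi _ => h i hi⟩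

lemma List.Pairwise.getElem_le_iff_lt_countP {α : Type*} [LinearOrder α] {l : List α}
    (hs : l.Pairwise (· ≤ ·)) {i : ℕ} (hi : i < l.length) (a : α) :
    l[i] ≤ a ↔ i < l.countP (· ≤ a) := by
  suffices key : ∀ (l₁ l₂ : List α) (x : α), (l₁ ++ x :: l₂).Pairwise (· ≤ ·) →
      (x ≤ a ↔ l₁.length < (l₁ ++ x :: l₂).countP (· ≤ a)) by
    have hsplit : l = l.take i ++ l[i] :: l.drop (i + 1) := by simp
    have := key _ _ _ (hsplit ▸ hs)
    rwa [← hsplit, List.length_take_of_le hi.le] at this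
  intro l₁ l₂ x hs
  rw [List.pairwise_append, List.pairwise_cons] at hs
  rw [List.countP_append, List.countP_cons]
  constructor
  · intro hx
    rw [List.countP_eq_length.mpr fun b hb => decide_eq_true
      ((hs.2.2 b hb x List.mem_cons_self).trans hx)]
    simp [hx]
  · intro hlt
    by_contra! hx
    rw [(List.countP_eq_zero (l := l₂)).mpr fun b hb => by
      simpa using hx.trans_le (hs.2.1.1 b hb)] at hlt
    have := List.countP_le_length (p := (· ≤ a)) (l := l₁)
    simp only [hx.not_ge, decide_false, Bool.false_eq_true, if_false, add_zero] at hlt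
    omega

lemma forall_getElem_le_iff_forall_le_mul_countP {l : List ℕ} {k : ℕ} (hk : 0 < k)
    (hs : l.Pairwise (· ≤ ·)) :
    (∀ i (hi : i < l.length), l[i] ≤ 1 + i * k) ↔
      ∀ j, 0 < j → j ≤ k * l.length → j ≤ k * l.countP (· ≤ j) := by
  constructor
  · intro hle j hj hjl
    set i := (j - 1) / k
    have hki : i * k ≤ j - 1 := Nat.div_mul_le_self (j - 1) k
    have hki' : j - 1 < k * (i + 1) := Nat.lt_mul_div_succ (j - 1) hk
    have hi : i < l.length := (Nat.div_lt_iff_lt_mul hk).mpr (by rw [mul_comm]; omega)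
    have hcount := (hs.getElem_le_iff_lt_countP hi j).mp ((hle i hi).trans (by omega))
    calc j ≤ k * (i + 1) := by omega
      _ ≤ k * l.countP (· ≤ j) := Nat.mul_le_mul_left k hcount
  · intro hcount i hi
    have hkl : k * (i + 1) ≤ k * l.length := Nat.mul_le_mul_left k hi
    have := hcount (1 + i * k) (by omega) (by rw [mul_comm i k]; rw [Nat.mul_succ] at hkl; omega)
    refine (hs.getElem_le_iff_lt_countP hi _).mpr (Nat.lt_of_mul_lt_mul_left (a := k) ?_)
    rw [mul_comm k i]
    omega

lemma isParkingSeq_replicate_iff {n k : ℕ} (hk : 0 < k) {cs : List ℕ}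
    (hs : cs.Pairwise (· ≤ ·)) :
    IsParkingSeq (List.replicate n k) cs 1 ↔ cs.length = n ∧ (∀ c ∈ cs, 1 ≤ c) ∧
      ∀ j, 0 < j → j ≤ k * n → j ≤ k * cs.countP (· ≤ j) := by
  rw [isParkingSeq_iff_forall₂_le_standardStarts le_rfl
    (fun y hy => (List.eq_of_mem_replicate hy).symm ▸ hk) hs,
    forall₂_le_standardStarts_replicate_iff]
  constructor
  · rintro ⟨hc, rfl, hle⟩
    exact ⟨rfl, hc, (forall_getElem_le_iff_forall_le_mul_countP hk hs).mp hle⟩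
  · rintro ⟨rfl, hc, hcount⟩
    exact ⟨hc, rfl, (forall_getElem_le_iff_forall_le_mul_countP hk hs).mpr hcount⟩

lemma existsUnique_lt_forall_le_add {m : ℕ} (hm : 0 < m) (g : ℕ → ℤ)
    (hg : ∀ t, g (t + m) = g t - 1) :
    ∃! t, t < m ∧ ∀ j, 0 < j → j < m → g t ≤ g (t + j) := by
  classical
  have hmin : ∃ t, t < m ∧ ∀ u < m, g t ≤ g u := by
    obtain ⟨t, ht, hle⟩ := (range m).exists_min_image g ⟨0, mem_range.mpr hm⟩
    exact ⟨t, mem_range.mp ht, fun u hu => hle u (mem_range.mpr hu)⟩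
  obtain ⟨ht₀, hle⟩ := Nat.find_spec hmin
  set t₀ := Nat.find hmin
  have hlt : ∀ u < t₀, g t₀ < g u := by
    intro u hu
    by_contra! h
    exact Nat.find_min hmin hu ⟨hu.trans ht₀, fun v hv => h.trans (hle v hv)⟩
  refine ⟨t₀, ⟨ht₀, fun j hj hjm => ?_⟩, fun t ⟨ht, hgood⟩ => ?_⟩
  · by_cases hwrap : t₀ + j < m
    · exact hle _ hwrap
    · have := hlt (t₀ + j - m) (by omega)
      rw [show t₀ + j = t₀ + j - m + m by omega, hg]
      omega
  · by_contra hne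
    rcases Nat.lt_or_gt_of_ne hne with hlt' | hgt
    · have := hgood (t₀ - t) (by omega) (by omega)
      rw [Nat.add_sub_cancel' hlt'.le] at this
      exact (hlt t hlt').not_ge this
    · have := hgood (t₀ + m - t) (by omega) (by omega)
      rw [show t + (t₀ + m - t) = t₀ + m by omega, hg] at this
      linarith [hle t ht]

lemma card_subtype_mul_card_eq_card_sym {G : Type*} [AddGroup G] {n : ℕ} (P : Sym G n → Prop)
    (h : ∀ u : Sym G n, ∃! t : G, P (u.map (· - t))) :
    Nat.card {u // P u} * Nat.card G = Nat.card (Sym G n) := by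
  have hcancel : ∀ (u : Sym G n) (t : G), (u.map (· + t)).map (· - t) = u := by
    intro u t; simp [Sym.map_map]
  rw [← Nat.card_prod]
  refine Nat.card_congr (Equiv.ofBijective (fun p => p.1.1.map (· + p.2)) ⟨?_, fun u => ?_⟩)
  · rintro ⟨⟨v, hv⟩, t⟩ ⟨⟨v', hv'⟩, t'⟩ (heq : v.map (· + t) = v'.map (· + t'))
    obtain rfl : t = t' := (h (v.map (· + t))).unique (by rwa [hcancel]) (by rwa [heq, hcancel])
    obtain rfl : v = v' := by simpa [hcancel] using congrArg (Sym.map (· - t)) heq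
    rfl
  · obtain ⟨t, ht, -⟩ := h u
    exact ⟨(⟨_, ht⟩, t), by simp [Sym.map_map]⟩

section Residues

variable {m : ℕ}

def IsBallot (k : ℕ) (s : Multiset (ZMod m)) : Prop :=
  ∀ j, 0 < j → j < m → j ≤ k * s.countP (fun x => x.val < j)

/-- `x ↦ x.val + 1` identifies `ZMod m` with the spots `1, …, m`. -/
def sortedReps (u : Multiset (ZMod m)) : List ℕ :=
  Multiset.sort (u.map (·.val + 1))

lemma countP_sortedReps (u : Multiset (ZMod m)) (j : ℕ) :
    (sortedReps u).countP (· ≤ j) = u.countP (·.val < j) := by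
  rw [← Multiset.coe_countP, sortedReps, Multiset.sort_eq, Multiset.countP_map,
    Multiset.countP_eq_card_filter]
  congr 2

lemma sortedReps_coe_map {cs : List ℕ} (hs : cs.Pairwise (· ≤ ·))
    (hc : ∀ c ∈ cs, 1 ≤ c ∧ c ≤ m) :
    sortedReps (cs.map (fun c => ((c - 1 : ℕ) : ZMod m)) : Multiset (ZMod m)) = cs := by
  have hid : cs.map (fun c => (((c - 1 : ℕ) : ZMod m)).val + 1) = cs := by
    conv_rhs => rw [← List.map_id cs]
    refine List.map_congr_left fun c hc' => ?_
    have := hc c hc'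
    rw [ZMod.val_cast_of_lt (by omega), id, Nat.sub_add_cancel this.1]
  rw [sortedReps, Multiset.map_coe, List.map_map, Function.comp_def, hid, Multiset.coe_sort,
    List.mergeSort_eq_self _ hs]

variable [NeZero m]

lemma countP_val_lt_eq_sum_count (s : Multiset (ZMod m)) {j : ℕ} (hj : j ≤ m) :
    s.countP (fun x => x.val < j) = ∑ v ∈ range j, s.count (v : ZMod m) := by
  have himage : (range j).image (fun v : ℕ => (v : ZMod m)) = univ.filter (fun x => x.val < j) := by
    ext x
    simp only [mem_image, mem_range, mem_filter, mem_univ, true_and]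
    constructor
    · rintro ⟨v, hv, rfl⟩
      rwa [ZMod.val_cast_of_lt (by omega)]
    · exact fun hx => ⟨x.val, hx, ZMod.natCast_zmod_val x⟩
  rw [← sum_image (g := fun v : ℕ => (v : ZMod m)) (f := fun x => s.count x), himage,
    sum_filter, Multiset.countP_eq_card_filter,
    ← Multiset.sum_count_eq_card (s := univ) fun _ _ => mem_univ _]
  · simp only [Multiset.count_filter]
  · intro a ha b hb hab
    simp only [coe_range, Set.mem_Iio] at ha hb
    rw [← ZMod.val_cast_of_lt (n := m) (by omega : a < m),
      ← ZMod.val_cast_of_lt (n := m) (by omega : b < m)]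
    exact congrArg ZMod.val hab

/-- The number of points of the `m`-periodic lift of `s` to `ℕ` lying below `j`. -/
def prefixCount (s : Multiset (ZMod m)) (j : ℕ) : ℕ :=
  ∑ v ∈ range j, s.count (v : ZMod m)

lemma prefixCount_add (s : Multiset (ZMod m)) (t : ℕ) {j : ℕ} (hj : j ≤ m) :
    prefixCount s (t + j) = prefixCount s t + (s.map (· - (t : ZMod m))).countP (·.val < j) := by
  rw [prefixCount, prefixCount, sum_range_add, countP_val_lt_eq_sum_count _ hj]
  congr 1
  refine sum_congr rfl fun v _ => ?_
  rw [← Multiset.count_map_eq_count' _ _ (sub_left_injective (b := (t : ZMod m)))]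
  push_cast
  rw [add_sub_cancel_left]

lemma prefixCount_add_period (s : Multiset (ZMod m)) (t : ℕ) :
    prefixCount s (t + m) = prefixCount s t + Multiset.card s := by
  rw [prefixCount_add s t le_rfl, Multiset.countP_eq_card.mpr fun x _ => ZMod.val_lt x,
    Multiset.card_map]

lemma isBallot_map_sub_iff (k : ℕ) (s : Multiset (ZMod m)) (t : ℕ) :
    IsBallot k (s.map (· - (t : ZMod m))) ↔ ∀ j, 0 < j → j < m →
      (k * prefixCount s t - t : ℤ) ≤ k * prefixCount s (t + j) - (t + j : ℕ) := by
  unfold IsBallot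
  refine forall₃_congr fun j _ hjm => ?_
  rw [prefixCount_add s t hjm.le, ← Nat.cast_le (α := ℤ)]
  push_cast
  constructor <;> intro h <;> linarith

theorem cycle_lemma {k : ℕ} (s : Multiset (ZMod m)) (hm : k * Multiset.card s + 1 = m) :
    ∃! t : ZMod m, IsBallot k (s.map (· - t)) := by
  obtain ⟨t₀, ⟨ht₀, hgood⟩, huniq⟩ := existsUnique_lt_forall_le_add (NeZero.pos m)
    (fun j => k * prefixCount s j - j) fun t => by
      have hm' : (m : ℤ) = k * Multiset.card s + 1 := by exact_mod_cast hm.symm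
      rw [prefixCount_add_period]
      push_cast
      linear_combination -hm'
  refine ⟨t₀, (isBallot_map_sub_iff k s t₀).mpr hgood, fun t ht => ?_⟩
  rw [← ZMod.natCast_zmod_val t] at ht ⊢
  rw [huniq t.val ⟨ZMod.val_lt t, (isBallot_map_sub_iff k s t.val).mp ht⟩]

lemma sortedReps_injective : Function.Injective (sortedReps (m := m)) := by
  intro u v h
  have := congrArg (fun l : List ℕ => (l : Multiset ℕ)) h
  simp only [sortedReps, Multiset.sort_eq] at this
  exact Multiset.map_injective (fun x y hxy => ZMod.val_injective m (by simpa using hxy)) this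

end Residues

lemma exists_isBallot_sortedReps_eq_iff {n k : ℕ} (hk : 0 < k) {cs : List ℕ} :
    (∃ u : Sym (ZMod (k * n + 1)) n, IsBallot k u.1 ∧ sortedReps u.1 = cs) ↔
      cs.length = n ∧ cs.Pairwise (· ≤ ·) ∧ (∀ c ∈ cs, 1 ≤ c) ∧
        ∀ j, 0 < j → j ≤ k * n → j ≤ k * cs.countP (· ≤ j) := by
  constructor
  · rintro ⟨u, hu, rfl⟩
    refine ⟨by simp [sortedReps], Multiset.pairwise_sort _ _, fun c hc => ?_, fun j hj hjn => ?_⟩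
    · obtain ⟨x, -, rfl⟩ := Multiset.mem_map.mp ((Multiset.mem_sort _).mp hc)
      omega
    · rw [countP_sortedReps]
      exact hu j hj (by omega)
  · rintro ⟨hlen, hs, hc, hcount⟩
    have hle : ∀ c ∈ cs, c ≤ k * n := by
      intro c hc'
      by_contra! hgt
      have hn : 0 < n := hlen ▸ List.length_pos_of_mem hc'
      have hall : cs.countP (· ≤ k * n) = cs.length := le_antisymm List.countP_le_length
        (by rw [hlen]; exact Nat.le_of_mul_le_mul_left (hcount (k * n) (by positivity) le_rfl) hk)
      simpa [hgt.not_ge] using List.countP_eq_length.mp hall c hc'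
    let u : Sym (ZMod (k * n + 1)) n :=
      ⟨cs.map (fun c => ((c - 1 : ℕ) : ZMod (k * n + 1))), by simp [hlen]⟩
    have hu : sortedReps u.1 = cs :=
      sortedReps_coe_map hs fun c hc' => ⟨hc c hc', (hle c hc').trans (Nat.le_succ _)⟩
    refine ⟨u, fun j hj hjn => ?_, hu⟩
    rw [← countP_sortedReps, hu]
    exact hcount j hj (by omega)

theorem stmt4_general (n k : ℕ) (hk : 0 < k) :
    {cs : List ℕ | cs.length = n ∧ List.Pairwise (· ≤ ·) cs ∧
        IsParkingSeq (List.replicate n k) cs 1}.ncard * (k * n + 1)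
      = ((k + 1) * n).choose n := by
  have hS : {cs : List ℕ | cs.length = n ∧ List.Pairwise (· ≤ ·) cs ∧
      IsParkingSeq (List.replicate n k) cs 1} =
      (fun u : Sym (ZMod (k * n + 1)) n => sortedReps u.1) '' {u | IsBallot k u.1} := by
    ext cs
    simp only [Set.mem_ofPred_eq, Set.mem_image, exists_isBallot_sortedReps_eq_iff hk]
    exact and_congr_right fun hlen => and_congr_right fun hs =>
      (isParkingSeq_replicate_iff hk hs).trans (by simp [hlen])
  have hinj : Function.Injective fun u : Sym (ZMod (k * n + 1)) n => sortedReps u.1 :=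
    fun _ _ h => Sym.coe_injective (sortedReps_injective h)
  have hcycle := card_subtype_mul_card_eq_card_sym (fun u : Sym (ZMod (k * n + 1)) n =>
    IsBallot k u.1) fun u => cycle_lemma u.1 (by rw [u.2])
  rw [Nat.card_zmod, Nat.card_eq_fintype_card (α := Sym _ n), Sym.card_sym_eq_choose,
    ZMod.card] at hcycle
  rw [hS, Set.ncard_image_of_injective _ hinj, ← Nat.card_coe_set_eq, Set.coe_ofPred, hcycle]
  rw [add_right_comm, Nat.add_sub_cancel, add_one_mul]

theorem stmt4 (n k : ℕ) (hn : 0 < n) (hk : 0 < k) :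
    {cs : List ℕ | cs.length = n ∧ List.Pairwise (· ≤ ·) cs ∧
        IsParkingSeq (List.replicate n k) cs 1}.ncard * (k * n + 1)
      = ((k + 1) * n).choose n :=
  stmt4_general n k hk
end

section
/- Let y = (k,k,...,k) ∈ (Z_+)^n with k > 1 and z ∈ Z_+. Then c = (c_1,...,c_n) is a permutation-invariant parking sequence for (y;z) if and only if (i) the order statistics satisfy c_{(i)} ≤ z + (i-1)k for all i ∈ [n], and (ii) every entry c_i lies in the set {1,2,...,z} ∪ {z+k, z+2k, ..., z+(n-1)k}. -/
open Finset

/-!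
Necessity. If the `i`-th smallest preference `t` (counting from `0`) exceeded `z + i k`, the
`n - i` cars preferring a spot `≥ t` would need `k (n - i)` spots in `[t, z - 1 + n k]`, which has
fewer. If `z < c ≤ z + (n - 1) k`, let the car preferring `c` enter first: it occupies `[c, c + k)`,
and since the cars fill the street exactly, the others must tile `[z, c)` by blocks of length `k`,
so `k ∣ c - z`.

Sufficiency. When every preference lies in `{1, …, z} ∪ {z + s k}`, every car parks on one of the
`n` blocks `[z + s k, z + (s + 1) k)`, namely the first free block at or after `⌈(c - z) / k⌉`.
This is classical parking of `n` unit cars on `n` spots, and the order-statistics bound is the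
parking-function condition; a Hall-type form of it is preserved as the cars park.
-/

theorem firstEmpty_eq_some_iff {occ : Finset ℕ} {M c j : ℕ} :
    firstEmpty occ M c = some j ↔ c ≤ j ∧ j ≤ M ∧ j ∉ occ ∧ ∀ i, c ≤ i → i < j → i ∈ occ := by
  simp only [firstEmpty, List.find?_eq_some_iff_getElem, List.getElem_range', List.length_range',
    decide_eq_true_eq, Bool.not_eq_true', decide_eq_false_iff_not, not_not]
  constructor
  · rintro ⟨hj, i, hi, rfl, hlt⟩
    refine ⟨by omega, by omega, hj, fun x hcx hxj => ?_⟩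
    simpa [Nat.add_sub_cancel' hcx] using hlt (x - c) (by omega)
  · rintro ⟨hcj, hjM, hj, hlt⟩
    exact ⟨hj, j - c, by omega, by omega, fun i hi => hlt _ (by omega) (by omega)⟩

theorem parkAux_cons_cons_of_firstEmpty {M j c y : ℕ} {occ : Finset ℕ} {cs ys : List ℕ}
    (hj : firstEmpty occ M c = some j) (hfree : ∀ i ∈ Ico j (j + y), i ∉ occ)
    (hjM : j + y - 1 ≤ M) :
    parkAux M occ (c :: cs) (y :: ys) = (parkAux M (occ ∪ Ico j (j + y)) cs ys).map (j :: ·) := by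
  simp only [parkAux, hj]
  rw [if_pos ⟨hfree, hjM⟩]

theorem exists_of_parkAux_cons_cons_eq_some {M c y : ℕ} {occ : Finset ℕ} {cs ys js : List ℕ}
    (h : parkAux M occ (c :: cs) (y :: ys) = some js) :
    ∃ j js', firstEmpty occ M c = some j ∧ (∀ i ∈ Ico j (j + y), i ∉ occ) ∧ j + y - 1 ≤ M ∧
      parkAux M (occ ∪ Ico j (j + y)) cs ys = some js' ∧ js = j :: js' := by
  simp only [parkAux] at h
  split at h
  · simp at h
  · split_ifs at h with hfit
    obtain ⟨js', hjs', rfl⟩ := Option.map_eq_some_iff.mp h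
    exact ⟨_, js', ‹_›, hfit.1, hfit.2, hjs', rfl⟩

theorem dvd_card_filter_Ico_lt {j k u : ℕ} (hu : u ∉ Ico j (j + k)) :
    k ∣ #{x ∈ Ico j (j + k) | x < u} := by
  rw [mem_Ico, not_and_or, not_le, not_lt] at hu
  rcases hu with hu | hu
  · rw [filter_false_of_mem fun x hx => by rw [mem_Ico] at hx; omega]
    exact dvd_zero k
  · rw [filter_true_of_mem fun x hx => by rw [mem_Ico] at hx; omega, Nat.card_Ico,
      Nat.add_sub_cancel_left]

/-- `B` is the set of spots taken by the cars preferring a spot `≥ t`: a union of `k`-blocks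
avoiding `occ`, whence the divisibility. -/
theorem exists_spots_of_parkAux_eq_some {M k : ℕ} (t : ℕ) {occ : Finset ℕ} {cs ys js : List ℕ}
    (hys : ∀ y ∈ ys, y = k) (h : parkAux M occ cs ys = some js) :
    ∃ B : Finset ℕ, Disjoint B occ ∧ B ⊆ Ico t (M + 1) ∧ #B = k * cs.countP (t ≤ ·) ∧
      ∀ u ∈ occ, k ∣ #{x ∈ B | x < u} := by
  induction cs generalizing occ ys js with
  | nil => exact ⟨∅, by simp⟩
  | cons c cs ih =>
    obtain _ | ⟨y, ys⟩ := ys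
    · simp [parkAux] at h
    obtain ⟨j, js', hj, hfree, hjM, hrest, -⟩ := exists_of_parkAux_cons_cons_eq_some h
    obtain ⟨hcj, -, -⟩ := firstEmpty_eq_some_iff.mp hj
    obtain rfl : k = y := (hys y List.mem_cons_self).symm
    obtain ⟨B, hBocc, hBt, hBcard, hBdvd⟩ :=
      ih (fun y' hy => hys y' (List.mem_cons_of_mem _ hy)) hrest
    have hBI : Disjoint B (Ico j (j + k)) := hBocc.mono_right subset_union_right
    by_cases htc : t ≤ c
    · refine ⟨B ∪ Ico j (j + k), ?_, ?_, ?_, fun u hu => ?_⟩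
      · exact disjoint_union_left.mpr
          ⟨hBocc.mono_right subset_union_left, disjoint_left.mpr hfree⟩
      · refine union_subset hBt fun x hx => ?_
        rw [mem_Ico] at hx ⊢
        omega
      · rw [card_union_of_disjoint hBI, hBcard, Nat.card_Ico, Nat.add_sub_cancel_left,
          List.countP_cons_of_pos (by simpa using htc)]
        ring
      · rw [filter_union, card_union_of_disjoint (disjoint_filter_filter hBI)]
        exact dvd_add (hBdvd u (mem_union_left _ hu))
          (dvd_card_filter_Ico_lt fun hu' => hfree u hu' hu)
    · refine ⟨B, hBocc.mono_right subset_union_left, hBt, ?_,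
        fun u hu => hBdvd u (mem_union_left _ hu)⟩
      rw [hBcard, List.countP_cons_of_neg (by simpa using htc)]

theorem List.Pairwise.length_sub_le_countP_getElem_le {α : Type*} [LinearOrder α] {L : List α}
    (hL : L.Pairwise (· ≤ ·)) {i : ℕ} (hi : i < L.length) :
    L.length - i ≤ L.countP (fun c => L[i] ≤ c) := by
  have hdrop := List.drop_eq_getElem_cons hi
  have hge : ∀ x ∈ L.drop i, L[i] ≤ x := by
    rw [hdrop, List.forall_mem_cons]
    exact ⟨le_rfl, (List.pairwise_cons.mp (hdrop ▸ hL.sublist (List.drop_sublist i L))).1⟩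
  calc L.length - i = (L.drop i).length := (List.length_drop ..).symm
    _ = (L.drop i).countP _ := (List.countP_eq_length.mpr (by simpa using hge)).symm
    _ ≤ _ := (List.drop_sublist i L).countP_le

theorem List.Pairwise.countP_lt_le {α : Type*} [LinearOrder α] {L : List α}
    (hL : L.Pairwise (· ≤ ·)) {i : ℕ} (hi : i < L.length) {v : α} (hv : L[i] ≤ v) :
    L.countP (fun c => v < c) ≤ L.length - (i + 1) := by
  have hdrop := List.drop_eq_getElem_cons hi
  have hle : ∀ x ∈ L.take i, L[i] ≥ x := by
    rw [← List.take_append_drop i L, List.pairwise_append, hdrop] at hL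
    exact fun x hx => hL.2.2 x hx _ List.mem_cons_self
  rw [← List.take_append_drop i L, List.countP_append, hdrop,
    List.countP_eq_zero.mpr fun x hx => by simpa using (hle x hx).trans hv,
    List.countP_cons_of_neg (by simpa using hv)]
  simpa using (L.drop (i + 1)).countP_le_length

theorem orderStats_perm (l : List ℕ) : (orderStats l).Perm l := by
  rw [← Multiset.coe_eq_coe, orderStats, Multiset.sort_eq]

theorem orderStats_eq_of_perm {l₁ l₂ : List ℕ} (h : l₁.Perm l₂) :
    orderStats l₁ = orderStats l₂ := by
  rw [orderStats, orderStats, Multiset.coe_eq_coe.mpr h]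

theorem length_sub_le_countP_orderStats_le {l : List ℕ} {i : ℕ} (hi : i < l.length) :
    l.length - i ≤ l.countP (fun c => (orderStats l).getD i 0 ≤ c) := by
  have hperm := orderStats_perm l
  have hi' : i < (orderStats l).length := hperm.length_eq ▸ hi
  rw [← hperm.countP_eq, List.getD_eq_getElem _ _ hi', ← hperm.length_eq]
  exact (Multiset.pairwise_sort _ _).length_sub_le_countP_getElem_le hi'

theorem countP_lt_le_of_orderStats_le {l : List ℕ} {i v : ℕ} (hi : i < l.length)
    (hv : (orderStats l).getD i 0 ≤ v) : l.countP (fun c => v < c) ≤ l.length - (i + 1) := by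
  have hperm := orderStats_perm l
  have hi' : i < (orderStats l).length := hperm.length_eq ▸ hi
  rw [List.getD_eq_getElem _ _ hi'] at hv
  rw [← hperm.countP_eq, ← hperm.length_eq]
  exact (Multiset.pairwise_sort _ _).countP_lt_le hi' hv

theorem IsParkingSeq.orderStats_getD_le {n k z : ℕ} {cs : List ℕ} (hk : 0 < k) (hz : 0 < z)
    (h : IsParkingSeq (List.replicate n k) cs z) {i : ℕ} (hi : i < n) :
    (orderStats cs).getD i 0 ≤ z + i * k := by
  obtain ⟨hlen, -, hsome⟩ := h
  rw [List.length_replicate] at hlen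
  obtain ⟨js, hjs⟩ := Option.isSome_iff_exists.mp hsome
  rw [parkResult, List.sum_replicate, smul_eq_mul] at hjs
  by_contra! hgt
  have hcount := hlen ▸ length_sub_le_countP_orderStats_le (l := cs) (hlen ▸ hi)
  generalize (orderStats cs).getD i 0 = t at hgt hcount
  obtain ⟨B, -, hBt, hBcard, -⟩ :=
    exists_spots_of_parkAux_eq_some t (fun y hy => List.eq_of_mem_replicate hy) hjs
  have hroom : #B ≤ z - 1 + n * k + 1 - t := Nat.card_Ico t _ ▸ card_le_card hBt
  have hcars : k * (n - i) + i * k = n * k := by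
    rw [Nat.mul_comm k, ← Nat.add_mul, Nat.sub_add_cancel hi.le]
  have hneed := Nat.mul_le_mul_left k hcount
  have hk_le := Nat.le_mul_of_pos_right k (Nat.sub_pos_of_lt hi)
  omega

theorem dvd_sub_of_isParkingSeq_cons {m k z c : ℕ} {cs : List ℕ} (hk : 0 < k) (hz : 0 < z)
    (hzc : z ≤ c) (hcm : c ≤ z + m * k) (h : IsParkingSeq (List.replicate (m + 1) k) (c :: cs) z) :
    k ∣ c - z := by
  obtain ⟨hlen, hpos, hsome⟩ := h
  obtain ⟨js, hjs⟩ := Option.isSome_iff_exists.mp hsome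
  rw [parkResult, List.replicate_succ, List.sum_cons, List.sum_replicate, smul_eq_mul] at hjs
  obtain ⟨j, js', hj, -, -, hrest, -⟩ := exists_of_parkAux_cons_cons_eq_some hjs
  obtain rfl : c = j := by
    have hc : firstEmpty (Ico 1 z) (z - 1 + (k + m * k)) c = some c :=
      firstEmpty_eq_some_iff.mpr ⟨le_rfl, by omega, by simp; omega, fun i h1 h2 => by omega⟩
    exact Option.some.inj (hc.symm.trans hj)
  obtain ⟨B, hBocc, hB, hBcard, hBdvd⟩ :=
    exists_spots_of_parkAux_eq_some 1 (fun y hy => List.eq_of_mem_replicate hy) hrest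
  rw [List.countP_eq_length.mpr (by simpa using fun x hx => hpos x (List.mem_cons_of_mem c hx))]
    at hBcard
  have hbelow : #{x ∈ B | x < c} ≤ c - z := by
    refine Nat.card_Ico z c ▸ card_le_card fun x hx => ?_
    obtain ⟨hxB, hxc⟩ := mem_filter.mp hx
    have := mem_Ico.mp (hB hxB)
    have := disjoint_left.mp hBocc hxB
    simp only [mem_union, mem_Ico] at this ⊢
    omega
  have habove : #{x ∈ B | ¬x < c} ≤ z - 1 + (k + m * k) + 1 - (c + k) := by
    refine Nat.card_Ico (c + k) _ ▸ card_le_card fun x hx => ?_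
    obtain ⟨hxB, hxc⟩ := mem_filter.mp hx
    have := mem_Ico.mp (hB hxB)
    have := disjoint_left.mp hBocc hxB
    simp only [mem_union, mem_Ico] at this ⊢
    omega
  have hsplit := card_filter_add_card_filter_not (s := B) (fun x => x < c)
  have hfilled : #{x ∈ B | x < c} = c - z := by
    simp only [List.length_cons, List.length_replicate, Nat.add_right_cancel_iff] at hlen
    rw [hlen, Nat.mul_comm] at hBcard
    omega
  exact hfilled ▸ hBdvd c (mem_union_right _ (by simp; omega))

theorem PermInvariant.le_or_eq_add_mul {n k z c : ℕ} {cs : List ℕ} (hk : 0 < k) (hz : 0 < z)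
    (h : PermInvariant (List.replicate n k) cs z) (hc : c ∈ cs) :
    c ≤ z ∨ ∃ s, 1 ≤ s ∧ s ≤ n - 1 ∧ c = z + s * k := by
  obtain hcz | hzc := le_or_gt c z
  · exact .inl hcz
  have hcs := h cs (.refl cs)
  have hlen : cs.length = n := hcs.1.trans (List.length_replicate ..)
  obtain ⟨m, rfl⟩ : ∃ m, n = m + 1 := Nat.exists_eq_add_one.mpr (hlen ▸ List.length_pos_of_mem hc)
  have hcm : c ≤ z + m * k := by
    by_contra! hcm
    have hnone := countP_lt_le_of_orderStats_le (hlen ▸ Nat.lt_add_one m)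
      (hcs.orderStats_getD_le hk hz (Nat.lt_add_one m))
    have hsome : 0 < cs.countP (fun x => z + m * k < x) :=
      List.countP_pos_iff.mpr ⟨c, hc, by simpa using hcm⟩
    omega
  obtain ⟨s, hs⟩ :=
    dvd_sub_of_isParkingSeq_cons hk hz hzc.le hcm (h _ (List.perm_cons_erase hc).symm)
  refine .inr ⟨s, Nat.pos_of_ne_zero fun hs0 => ?_, ?_, ?_⟩
  · simp [hs0] at hs
    omega
  · exact Nat.le_of_mul_le_mul_left (hs ▸ Nat.mul_comm m k ▸ by omega) hk
  · rw [Nat.mul_comm]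
    omega

def blockOcc (z k : ℕ) (S : Finset ℕ) : Finset ℕ :=
  Ico 1 z ∪ S.biUnion fun s => Ico (z + s * k) (z + s * k + k)

section blockOcc

variable {z k x : ℕ} {S : Finset ℕ}

theorem mem_blockOcc_of_lt (hx : x < z) : x ∈ blockOcc z k S ↔ 1 ≤ x := by
  simp only [blockOcc, mem_union, mem_Ico, mem_biUnion]
  constructor
  · rintro (h | ⟨s, -, h⟩) <;> omega
  · exact fun h => .inl ⟨h, hx⟩

theorem mem_blockOcc_of_le (hk : 0 < k) (hx : z ≤ x) : x ∈ blockOcc z k S ↔ (x - z) / k ∈ S := by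
  simp only [blockOcc, mem_union, mem_Ico, mem_biUnion]
  constructor
  · rintro (h | ⟨s, hs, h⟩)
    · omega
    · convert hs
      rw [Nat.div_eq_iff hk]
      omega
  · intro h
    refine .inr ⟨_, h, ?_⟩
    have h₁ := Nat.div_mul_le_self (x - z) k
    have h₂ := Nat.lt_div_mul_add (a := x - z) hk
    omega

theorem blockOcc_insert (i : ℕ) :
    blockOcc z k (insert i S) = blockOcc z k S ∪ Ico (z + i * k) (z + i * k + k) := by
  rw [blockOcc, blockOcc, biUnion_insert, union_left_comm, union_assoc, union_comm (S.biUnion _),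
    union_left_comm]

theorem blockOcc_empty : blockOcc z k ∅ = Ico 1 z := by
  simp [blockOcc]

end blockOcc

theorem parkAux_blockOcc_cons {n k z c i : ℕ} {S : Finset ℕ} {cs ys : List ℕ} (hk : 0 < k)
    (hc : 1 ≤ c) (hci : c ≤ z + i * k) (hin : i < n) (hiS : i ∉ S)
    (hgap : ∀ s, (c - z) / k ≤ s → s < i → s ∈ S) :
    parkAux (z - 1 + n * k) (blockOcc z k S) (c :: cs) (k :: ys) =
      (parkAux (z - 1 + n * k) (blockOcc z k (insert i S)) cs ys).map ((z + i * k) :: ·) := by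
  have hfits : i * k + k ≤ n * k := Nat.succ_mul i k ▸ Nat.mul_le_mul_right k hin
  have hblock : ∀ x, z + i * k ≤ x → x < z + i * k + k → (x - z) / k = i := fun x h₁ h₂ =>
    (Nat.div_eq_iff hk).mpr ⟨by omega, by omega⟩
  rw [blockOcc_insert]
  refine parkAux_cons_cons_of_firstEmpty (firstEmpty_eq_some_iff.mpr ⟨hci, by omega, ?_, ?_⟩)
    (fun x hx => ?_) (by omega)
  · rw [mem_blockOcc_of_le hk (by omega), hblock _ le_rfl (by omega)]
    exact hiS
  · intro x hcx hxi
    obtain hxz | hzx := lt_or_ge x z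
    · exact (mem_blockOcc_of_lt hxz).mpr (hc.trans hcx)
    · rw [mem_blockOcc_of_le hk hzx]
      exact hgap _ (Nat.div_le_div_right (by omega))
        ((Nat.div_lt_iff_lt_mul hk).mpr (by omega))
  · rw [mem_Ico] at hx
    rw [mem_blockOcc_of_le hk (by omega), hblock x hx.1 hx.2]
    exact hiS

/-- The parking-function condition for cars with block preferences `rs` when the blocks in `S`
are already taken. -/
def BlockHallCondition (n : ℕ) (rs : List ℕ) (S : Finset ℕ) : Prop :=
  ∀ r ≤ n, rs.countP (fun p => r ≤ p) + #{s ∈ S | r ≤ s} + r ≤ n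

theorem card_filter_ge_add_sub_le_of_Ico_subset {S : Finset ℕ} {r r' : ℕ} (hrr' : r ≤ r')
    (hS : Ico r r' ⊆ S) :
    #{s ∈ S | r' ≤ s} + (r' - r) ≤ #{s ∈ S | r ≤ s} := by
  have hdisj : Disjoint {s ∈ S | r' ≤ s} (Ico r r') :=
    disjoint_left.mpr fun x hx hx' => by simp only [mem_filter, mem_Ico] at hx hx'; omega
  rw [← Nat.card_Ico r r', ← card_union_of_disjoint hdisj]
  refine card_le_card fun x hx => ?_
  simp only [mem_union, mem_filter, mem_Ico] at hx ⊢
  rcases hx with ⟨hxS, hx⟩ | hx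
  · exact ⟨hxS, by omega⟩
  · exact ⟨hS (mem_Ico.mpr hx), hx.1⟩

theorem BlockHallCondition.exists_step {n r : ℕ} {rs : List ℕ} {S : Finset ℕ}
    (h : BlockHallCondition n (r :: rs) S) :
    ∃ i, r ≤ i ∧ i < n ∧ i ∉ S ∧ (∀ s, r ≤ s → s < i → s ∈ S) ∧
      BlockHallCondition n rs (insert i S) := by
  classical
  have hex : ∃ i, r ≤ i ∧ i ∉ S := by
    obtain ⟨x, hx⟩ := Infinite.exists_notMem_finset (S ∪ range r)
    simp only [mem_union, mem_range, not_or, not_lt] at hx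
    exact ⟨x, hx.2, hx.1⟩
  obtain ⟨hri, hiS⟩ := Nat.find_spec hex
  have hgap : ∀ s, r ≤ s → s < Nat.find hex → s ∈ S := fun s hrs hsi => by
    by_contra hs
    exact Nat.find_min hex hsi ⟨hrs, hs⟩
  have hin : Nat.find hex < n := by
    by_contra! hni
    have hfull := card_filter_ge_add_sub_le_of_Ico_subset (S := S) (min_le_right r n) fun s hs => by
      rw [mem_Ico] at hs
      exact hgap s (by omega) (by omega)
    have hmin := h (min r n) (min_le_right r n)
    rw [List.countP_cons_of_pos (by simp)] at hmin
    omega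
  refine ⟨Nat.find hex, hri, hin, hiS, hgap, fun r' hr' => ?_⟩
  set i := Nat.find hex
  have hins : #{s ∈ insert i S | r' ≤ s} ≤ #{s ∈ S | r' ≤ s} + if r' ≤ i then 1 else 0 := by
    rw [filter_insert]
    split_ifs
    · exact card_insert_le _ _
    · exact Nat.le_add_right _ _
  have hr'_cons := h r' hr'
  rw [List.countP_cons] at hr'_cons
  obtain hr'r | hrr' := le_or_gt r' r
  · simp only [hr'r, decide_true, if_true] at hr'_cons
    split_ifs at hins <;> omega
  obtain hr'i | hir' := le_or_gt r' i
  · have hfull := card_filter_ge_add_sub_le_of_Ico_subset (S := S) hrr'.le fun s hs => by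
      rw [mem_Ico] at hs
      exact hgap s hs.1 (by omega)
    have hr_cons := h r (by omega)
    rw [List.countP_cons_of_pos (by simp)] at hr_cons
    have hmono : rs.countP (fun p => r' ≤ p) ≤ rs.countP (fun p => r ≤ p) :=
      List.countP_mono_left fun x _ hx => by simp only [decide_eq_true_eq] at hx ⊢; omega
    rw [if_pos hr'i] at hins
    omega
  · rw [if_neg (by omega)] at hins
    omega

theorem isSome_parkAux_blockOcc {n k z : ℕ} (hk : 0 < k) {cs : List ℕ} {S : Finset ℕ}
    (hpos : ∀ c ∈ cs, 1 ≤ c) (hblock : ∀ c ∈ cs, c ≤ z ∨ ∃ s, c = z + s * k)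
    (hH : BlockHallCondition n (cs.map fun c => (c - z) / k) S) :
    (parkAux (z - 1 + n * k) (blockOcc z k S) cs (List.replicate cs.length k)).isSome := by
  induction cs generalizing S with
  | nil => rfl
  | cons c cs ih =>
    simp only [List.map_cons] at hH
    obtain ⟨i, hri, hin, hiS, hgap, hH'⟩ := BlockHallCondition.exists_step hH
    have hci : c ≤ z + i * k := by
      obtain hcz | ⟨s, rfl⟩ := hblock c List.mem_cons_self
      · omega
      · rw [Nat.add_sub_cancel_left, Nat.mul_div_cancel _ hk] at hri
        have hsi := Nat.mul_le_mul_right k hri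
        omega
    rw [List.length_cons, List.replicate_succ,
      parkAux_blockOcc_cons hk (hpos c List.mem_cons_self) hci hin hiS hgap, Option.isSome_map]
    exact ih (fun c hc => hpos c (List.mem_cons_of_mem _ hc))
      (fun c hc => hblock c (List.mem_cons_of_mem _ hc)) hH'

theorem blockHallCondition_of_orderStats_le {n k z : ℕ} (hk : 0 < k) {cs : List ℕ}
    (hlen : cs.length = n) (hstats : ∀ i < n, (orderStats cs).getD i 0 ≤ z + i * k) :
    BlockHallCondition n (cs.map fun c => (c - z) / k) ∅ := by
  intro r hr
  rw [filter_empty, card_empty, add_zero, List.countP_map]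
  obtain _ | r := r
  · simp [hlen]
  · have hfew := countP_lt_le_of_orderStats_le (hlen ▸ hr) (hstats r hr)
    have hmono : cs.countP (fun c => r + 1 ≤ (c - z) / k) ≤ cs.countP (fun c => z + r * k < c) :=
      List.countP_mono_left fun c _ hc => by
        simp only [decide_eq_true_eq, Nat.le_div_iff_mul_le hk, Nat.succ_mul] at hc ⊢
        omega
    simp only [Function.comp_def] at hmono ⊢
    omega

theorem isParkingSeq_of_orderStats_le {n k z : ℕ} (hk : 0 < k) {cs : List ℕ}
    (hlen : cs.length = n) (hpos : ∀ c ∈ cs, 1 ≤ c)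
    (hstats : ∀ i < n, (orderStats cs).getD i 0 ≤ z + i * k)
    (hblock : ∀ c ∈ cs, c ≤ z ∨ ∃ s, c = z + s * k) :
    IsParkingSeq (List.replicate n k) cs z := by
  refine ⟨by rw [hlen, List.length_replicate], hpos, ?_⟩
  have := isSome_parkAux_blockOcc hk hpos hblock
    (blockHallCondition_of_orderStats_le hk hlen hstats)
  rwa [blockOcc_empty, hlen, ← smul_eq_mul, ← List.sum_replicate] at this

theorem stmt8_general (n k z : ℕ) (hk : 1 < k) (hz : 0 < z) (cs : List ℕ) :
    PermInvariant (List.replicate n k) cs z ↔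
      cs.length = n ∧ (∀ c ∈ cs, 1 ≤ c) ∧
      (∀ i < n, (orderStats cs).getD i 0 ≤ z + i * k) ∧
      (∀ c ∈ cs, c ≤ z ∨ ∃ s, 1 ≤ s ∧ s ≤ n - 1 ∧ c = z + s * k) := by
  have hk₀ : 0 < k := zero_lt_one.trans hk
  constructor
  · intro h
    have hcs := h cs (.refl cs)
    exact ⟨hcs.1.trans (List.length_replicate ..), hcs.2.1,
      fun i hi => hcs.orderStats_getD_le hk₀ hz hi,
      fun c hc => h.le_or_eq_add_mul hk₀ hz hc⟩
  · rintro ⟨hlen, hpos, hstats, hblock⟩ cs' hperm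
    refine isParkingSeq_of_orderStats_le hk₀ (hperm.length_eq.trans hlen)
      (fun c hc => hpos c (hperm.subset hc)) (orderStats_eq_of_perm hperm ▸ hstats)
      fun c hc => ?_
    obtain hcz | ⟨s, -, -, hs⟩ := hblock c (hperm.subset hc)
    exacts [.inl hcz, .inr ⟨s, hs⟩]

theorem stmt8 (n k z : ℕ) (hn : 0 < n) (hk : 1 < k) (hz : 0 < z) (cs : List ℕ) :
    PermInvariant (List.replicate n k) cs z ↔
      cs.length = n ∧ (∀ c ∈ cs, 1 ≤ c) ∧
      (∀ i < n, (orderStats cs).getD i 0 ≤ z + i * k) ∧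
      (∀ c ∈ cs, c ≤ z ∨ ∃ s, 1 ≤ s ∧ s ≤ n - 1 ∧ c = z + s * k) :=
  stmt8_general n k z hk hz cs
end
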